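/- arXiv:2409.19347 — 3 statements merged into one kernel-verified Lean document; each statement's English description precedes it below -/
import Mathlib

section
/- Let H be a real Hilbert space, U ⊆ H nonempty closed convex, ĥ ∈ U, and J : H → ℝ twice continuously (Fréchet) differentiable. Suppose J'(ĥ)(h − ĥ) ≥ 0 for all h ∈ U (first-order condition), and suppose there exist μ > 0 and τ > 0 such that J''(ĥ)[v, v] ≥ μ‖v‖² for all v in the extended critical cone E = {v ∈ T_U(ĥ) : J'(ĥ)v ≤ τ‖v‖}. Then there exist ε > 0 and ρ > 0 such that J(h) ≥ J(ĥ) + ε‖h − ĥ‖² for all h ∈ U with ‖h − ĥ‖ ≤ ρ. -/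
set_option maxHeartbeats 1000000
open scoped RealInnerProductSpace
open Filter Topology

lemma taylor_aux {H : Type*} [NormedAddCommGroup H] [NormedSpace ℝ H]
    (J : H → ℝ) (hJ : ContDiff ℝ 2 J) (x v : H) (m : ℝ)
    (hm : ∀ t ∈ Set.Icc (0:ℝ) 1, m ≤ fderiv ℝ (fderiv ℝ J) (x + t • v) v v) :
    J x + fderiv ℝ J x v + m / 2 ≤ J (x + v) := by
  have hJ1 : Differentiable ℝ J := hJ.differentiable (by norm_num)
  have hG : ContDiff ℝ 1 (fderiv ℝ J) := hJ.fderiv_right (m := 1) (by norm_num)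
  have hG1 : Differentiable ℝ (fderiv ℝ J) := hG.differentiable (by norm_num)
  have hL : ∀ t : ℝ, HasDerivAt (fun s : ℝ => x + s • v) v t := by
    intro t
    simpa using ((hasDerivAt_id t).smul_const v).const_add x
  have hψ : ∀ t : ℝ, HasDerivAt (fun s : ℝ => J (x + s • v))
      (fderiv ℝ J (x + t • v) v) t := by
    intro t
    exact (hJ1 _).hasFDerivAt.comp_hasDerivAt t (hL t)
  have hφ : ∀ t : ℝ, HasDerivAt (fun s : ℝ => fderiv ℝ J (x + s • v) v)
      (fderiv ℝ (fderiv ℝ J) (x + t • v) v v) t := by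
    intro t
    have h1 : HasDerivAt (fun s : ℝ => fderiv ℝ J (x + s • v))
        (fderiv ℝ (fderiv ℝ J) (x + t • v) v) t :=
      (hG1 _).hasFDerivAt.comp_hasDerivAt t (hL t)
    exact (ContinuousLinearMap.apply ℝ ℝ v).hasFDerivAt.comp_hasDerivAt t h1
  set F' : ℝ → ℝ := fun t => fderiv ℝ J (x + t • v) v - fderiv ℝ J x v - m * t with hF'def
  set F : ℝ → ℝ := fun t => J (x + t • v) - J x - t * fderiv ℝ J x v - m * t ^ 2 / 2 with hFdef
  have hF'deriv : ∀ t : ℝ, HasDerivAt F (F' t) t := by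
    intro t
    have h2 : HasDerivAt (fun s : ℝ => m * s ^ 2 / 2) (m * t) t := by
      have := ((hasDerivAt_pow 2 t).const_mul m).div_const 2
      refine this.congr_deriv ?_
      norm_num
      ring
    have h3 : HasDerivAt (fun s : ℝ => s * fderiv ℝ J x v) (fderiv ℝ J x v) t := by
      simpa using (hasDerivAt_id t).mul_const (fderiv ℝ J x v)
    exact (((hψ t).sub_const (J x)).sub h3).sub h2
  have hF''deriv : ∀ t : ℝ, HasDerivAt F' (fderiv ℝ (fderiv ℝ J) (x + t • v) v v - m) t := by
    intro t
    have h4 : HasDerivAt (fun s : ℝ => m * s) m t := by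
      simpa using (hasDerivAt_id t).const_mul m
    exact (((hφ t).sub_const (fderiv ℝ J x v)).sub h4)
  have mono1 : MonotoneOn F' (Set.Icc 0 1) := by
    apply monotoneOn_of_deriv_nonneg (convex_Icc 0 1)
    · exact fun t _ => (hF''deriv t).continuousAt.continuousWithinAt
    · exact fun t _ => (hF''deriv t).differentiableAt.differentiableWithinAt
    · intro t ht
      rw [interior_Icc] at ht
      rw [(hF''deriv t).deriv]
      have := hm t ⟨le_of_lt ht.1, le_of_lt ht.2⟩
      linarith
  have hF'0 : F' 0 = 0 := by simp [hF'def]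
  have hF'nonneg : ∀ t ∈ Set.Icc (0:ℝ) 1, 0 ≤ F' t := by
    intro t ht
    have := mono1 (Set.left_mem_Icc.mpr zero_le_one) ht ht.1
    rw [hF'0] at this
    exact this
  have mono2 : MonotoneOn F (Set.Icc 0 1) := by
    apply monotoneOn_of_deriv_nonneg (convex_Icc 0 1)
    · exact fun t _ => (hF'deriv t).continuousAt.continuousWithinAt
    · exact fun t _ => (hF'deriv t).differentiableAt.differentiableWithinAt
    · intro t ht
      rw [interior_Icc] at ht
      rw [(hF'deriv t).deriv]
      exact hF'nonneg t ⟨le_of_lt ht.1, le_of_lt ht.2⟩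
  have hF0 : F 0 = 0 := by simp [hFdef]
  have hF1 : 0 ≤ F 1 := by
    have := mono2 (Set.left_mem_Icc.mpr zero_le_one) (Set.right_mem_Icc.mpr zero_le_one) zero_le_one
    rw [hF0] at this
    exact this
  simp only [hFdef, one_smul, one_mul, one_pow, mul_one] at hF1
  linarith

theorem stmt2 {H : Type*} [NormedAddCommGroup H] [InnerProductSpace ℝ H] [CompleteSpace H]
    (U : Set H) (hUne : U.Nonempty) (hUc : IsClosed U) (hUconv : Convex ℝ U)
    (hhat : H) (hhhatU : hhat ∈ U)
    (J : H → ℝ) (hJ : ContDiff ℝ 2 J)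
    (N T : Set H)
    (hN : N = {z : H | ∀ v ∈ U, ⟪z, v - hhat⟫ ≤ 0})
    (hT : T = {z : H | ∀ v ∈ N, ⟪z, v⟫ ≤ 0})
    (hfoc : ∀ h ∈ U, 0 ≤ fderiv ℝ J hhat (h - hhat))
    (μ τ : ℝ) (hμ : 0 < μ) (hτ : 0 < τ)
    (hssc : ∀ v ∈ T, fderiv ℝ J hhat v ≤ τ * ‖v‖ →
      μ * ‖v‖ ^ 2 ≤ fderiv ℝ (fderiv ℝ J) hhat v v) :
    ∃ ε > (0:ℝ), ∃ ρ > (0:ℝ), ∀ h ∈ U, ‖h - hhat‖ ≤ ρ →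
      J hhat + ε * ‖h - hhat‖ ^ 2 ≤ J h := by
  have hG : ContDiff ℝ 1 (fderiv ℝ J) := hJ.fderiv_right (m := 1) (by norm_num)
  have hcont : Continuous (fderiv ℝ (fderiv ℝ J)) := hG.continuous_fderiv (by norm_num)
  set D2 := fderiv ℝ (fderiv ℝ J) with hD2
  set C : ℝ := ‖D2 hhat‖ with hC
  have hCnn : 0 ≤ C := norm_nonneg (D2 hhat)
  obtain ⟨ρ₁, hρ₁pos, hρ₁⟩ := (Metric.continuousAt_iff (f := D2) (a := hhat)).mp (hcont.continuousAt (x := hhat)) (μ / 2)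
    (by positivity)
  refine ⟨μ / 4, by positivity, min (ρ₁ / 2) (τ / (C + μ)), by positivity, ?_⟩
  intro h hhU hhρ
  set v : H := h - hhat with hv
  have hhv : hhat + v = h := by simp [hv]
  have hvρ₁ : ‖v‖ < ρ₁ := lt_of_le_of_lt (hhρ.trans (min_le_left _ _)) (by linarith)
  have hvτ : ‖v‖ ≤ τ / (C + μ) := hhρ.trans (min_le_right _ _)
  -- bound on second derivative variation along the segment
  have hseg : ∀ t ∈ Set.Icc (0:ℝ) 1,
      D2 hhat v v - μ / 2 * ‖v‖ ^ 2 ≤ D2 (hhat + t • v) v v := by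
    intro t ht
    have hdist : dist (hhat + t • v) hhat < ρ₁ := by
      rw [dist_eq_norm, add_sub_cancel_left, norm_smul, Real.norm_eq_abs,
        abs_of_nonneg ht.1]
      calc t * ‖v‖ ≤ 1 * ‖v‖ := by
            apply mul_le_mul_of_nonneg_right ht.2 (norm_nonneg _)
        _ < ρ₁ := by rw [one_mul]; exact hvρ₁
    have hnd : ‖D2 (hhat + t • v) - D2 hhat‖ < μ / 2 := by
      have := hρ₁ hdist
      exact lt_of_eq_of_lt (dist_eq_norm (D2 (hhat + t • v)) (D2 hhat)).symm this
    have hb : ‖(D2 (hhat + t • v) - D2 hhat) v v‖ ≤ ‖D2 (hhat + t • v) - D2 hhat‖ * ‖v‖ * ‖v‖ := by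
      calc ‖(D2 (hhat + t • v) - D2 hhat) v v‖ ≤ ‖(D2 (hhat + t • v) - D2 hhat) v‖ * ‖v‖ :=
            ContinuousLinearMap.le_opNorm _ v
        _ ≤ ‖D2 (hhat + t • v) - D2 hhat‖ * ‖v‖ * ‖v‖ :=
            mul_le_mul_of_nonneg_right (ContinuousLinearMap.le_opNorm _ v) (norm_nonneg _)
    have hbb : ‖D2 (hhat + t • v) - D2 hhat‖ * ‖v‖ * ‖v‖ ≤ μ / 2 * ‖v‖ ^ 2 := by
      have h1 : ‖D2 (hhat + t • v) - D2 hhat‖ * ‖v‖ * ‖v‖ ≤ μ / 2 * ‖v‖ * ‖v‖ := by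
        apply mul_le_mul_of_nonneg_right _ (norm_nonneg _)
        exact mul_le_mul_of_nonneg_right hnd.le (norm_nonneg _)
      nlinarith [norm_nonneg v]
    have happ : (D2 (hhat + t • v) - D2 hhat) v v = D2 (hhat + t • v) v v - D2 hhat v v := by
      simp [ContinuousLinearMap.sub_apply]
    rw [happ, Real.norm_eq_abs] at hb
    have := abs_le.mp (hb.trans hbb)
    linarith [this.1]
  have hD2bound : -(C * ‖v‖ ^ 2) ≤ D2 hhat v v := by
    have hb : ‖D2 hhat v v‖ ≤ C * ‖v‖ * ‖v‖ := by
      calc ‖D2 hhat v v‖ ≤ ‖D2 hhat v‖ * ‖v‖ := ContinuousLinearMap.le_opNorm _ v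
        _ ≤ C * ‖v‖ * ‖v‖ :=
            mul_le_mul_of_nonneg_right (ContinuousLinearMap.le_opNorm _ v) (norm_nonneg _)
    rw [Real.norm_eq_abs] at hb
    have h1 := (abs_le.mp hb).1
    have h2 : C * ‖v‖ * ‖v‖ = C * ‖v‖ ^ 2 := by ring
    linarith
  by_cases hcase : fderiv ℝ J hhat v ≤ τ * ‖v‖
  · -- critical cone case
    have hvT : v ∈ T := by
      rw [hT]
      intro z hz
      rw [hN] at hz
      rw [real_inner_comm]
      exact hz h hhU
    have hkey := hssc v hvT hcase
    have htay := taylor_aux J hJ hhat v (μ / 2 * ‖v‖ ^ 2) (fun t ht => by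
      have := hseg t ht
      linarith)
    rw [hhv] at htay
    have hfoc' := hfoc h hhU
    rw [← hv] at hfoc'
    nlinarith [sq_nonneg ‖v‖]
  · push_neg at hcase
    have htay := taylor_aux J hJ hhat v (-(C * ‖v‖ ^ 2) - μ / 2 * ‖v‖ ^ 2) (fun t ht => by
      have := hseg t ht
      linarith)
    rw [hhv] at htay
    have hτv : τ * ‖v‖ ≤ fderiv ℝ J hhat v := hcase.le
    have hvmul : ‖v‖ * (C + μ) ≤ τ := by
      exact (le_div_iff₀ (by positivity)).mp hvτ
    nlinarith [norm_nonneg v, sq_nonneg ‖v‖]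
end

section
/- Let H be a real Hilbert space, U ⊆ H closed convex, and J, J_ε : H → ℝ with J continuous. Suppose ĥ ∈ U is a strict local minimizer of J on U in a closed ball B_ρ(ĥ): J(ĥ) < J(h) for all h ∈ U ∩ B_ρ(ĥ), h ≠ ĥ. Suppose for each ε > 0 the problem min over U ∩ B_ρ(ĥ) of J_ε has a solution h_ε, and every weak limit point of (h_ε) as ε → 0 is a global minimizer of J on U ∩ B_ρ(ĥ), with the convergence being strong along such subsequences. Then h_ε → ĥ strongly in H as ε → 0, and for all sufficiently small ε, h_ε lies in the open ball B_ρ(ĥ) (hence is a local minimizer of J_ε on U). -/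
open scoped RealInnerProductSpace
open Filter Topology

/-- Weak sequential compactness of bounded sequences in a real Hilbert space. -/
theorem weak_seq_compact_aux {H : Type*} [NormedAddCommGroup H] [InnerProductSpace ℝ H]
    [CompleteSpace H] (R : ℝ) (x : ℕ → H) (hx : ∀ k, ‖x k‖ ≤ R) :
    ∃ g : H, ∃ φ : ℕ → ℕ, StrictMono φ ∧
      ∀ w : H, Tendsto (fun k => ⟪x (φ k), w⟫) atTop (𝓝 ⟪g, w⟫) := by
  have hR : 0 ≤ R := le_trans (norm_nonneg _) (hx 0)
  set K : Submodule ℝ H := (Submodule.span ℝ (Set.range x)).topologicalClosure with hK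
  have hKclosed : IsClosed (K : Set H) := Submodule.isClosed_topologicalClosure _
  haveI : CompleteSpace K := hKclosed.completeSpace_coe
  have hxK : ∀ k, x k ∈ K :=
    fun k => Submodule.le_topologicalClosure _ (Submodule.subset_span ⟨k, rfl⟩)
  -- a countable set whose closure contains K
  have hsep : TopologicalSpace.IsSeparable (K : Set H) :=
    ((Set.countable_range x).isSeparable.span).closure
  obtain ⟨c, hc_count, hc_sub⟩ := hsep
  have hc_ne : (insert (0 : H) c).Nonempty := ⟨0, Set.mem_insert _ _⟩
  obtain ⟨d, hd⟩ := (hc_count.insert 0).exists_eq_range hc_ne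
  have hc_sub' : (K : Set H) ⊆ closure (Set.range d) := by
    rw [← hd]
    exact hc_sub.trans (closure_mono (Set.subset_insert _ _))
  -- extract a subsequence converging weakly against each d n
  set F : ℕ → (ℕ → ℝ) := fun k n => ⟪x k, d n⟫ with hF
  have hScomp : IsCompact (Set.pi Set.univ fun n => Set.Icc (-(R * ‖d n‖)) (R * ‖d n‖)) :=
    isCompact_univ_pi fun n => isCompact_Icc
  have hbound : ∀ k y, |⟪x k, y⟫| ≤ R * ‖y‖ := by
    intro k y
    calc |⟪x k, y⟫| ≤ ‖x k‖ * ‖y‖ := abs_real_inner_le_norm _ _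
      _ ≤ R * ‖y‖ := by
        apply mul_le_mul_of_nonneg_right (hx k) (norm_nonneg _)
  have hFmem : ∀ k, F k ∈ Set.pi Set.univ fun n => Set.Icc (-(R * ‖d n‖)) (R * ‖d n‖) := by
    intro k n _
    have := hbound k (d n)
    rw [abs_le] at this
    exact ⟨this.1, this.2⟩
  obtain ⟨a, -, φ, hφmono, hφtend⟩ := hScomp.tendsto_subseq hFmem
  have hptwise : ∀ n, Tendsto (fun k => ⟪x (φ k), d n⟫) atTop (𝓝 (a n)) := by
    rw [tendsto_pi_nhds] at hφtend
    exact fun n => hφtend n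
  -- every inner product along the subsequence is Cauchy
  have key : ∀ y : H, CauchySeq fun k => ⟪x (φ k), y⟫ := by
    intro y
    set Py : H := (K.orthogonalProjectionOnto y : H) with hPy
    have hxy : ∀ k, ⟪x k, y⟫ = ⟪x k, Py⟫ := by
      intro k
      have h2 : y - Py ∈ Kᗮ := K.sub_starProjection_mem_orthogonal y
      have h3 : ⟪x k, y - Py⟫ = 0 := (Submodule.mem_orthogonal K _).mp h2 (x k) (hxK k)
      rw [inner_sub_right] at h3
      linarith
    rw [Metric.cauchySeq_iff]
    intro ε hε
    -- approximate Py by some d n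
    have hPyK : Py ∈ (K : Set H) := (K.orthogonalProjectionOnto y).2
    have := hc_sub' hPyK
    rw [Metric.mem_closure_iff] at this
    obtain ⟨z, hz, hzdist⟩ := this (ε / (4 * (R + 1))) (by positivity)
    obtain ⟨n, rfl⟩ := hz
    obtain ⟨N, hN⟩ := (Metric.cauchySeq_iff.mp (hptwise n).cauchySeq) (ε / 2) (by positivity)
    refine ⟨N, fun m hm l hl => ?_⟩
    have hml := hN m hm l hl
    have e1 : ∀ j, |⟪x (φ j), Py - d n⟫| ≤ R * ‖Py - d n‖ := fun j => hbound _ _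
    have e2 : ‖Py - d n‖ < ε / (4 * (R + 1)) := by
      rwa [dist_eq_norm] at hzdist
    have e3 : ∀ j, |⟪x (φ j), Py - d n⟫| < ε / 4 := by
      intro j
      have h4 : (R + 1) * (ε / (4 * (R + 1))) = ε / 4 := by
        field_simp
      calc |⟪x (φ j), Py - d n⟫| ≤ R * ‖Py - d n‖ := e1 j
        _ ≤ (R + 1) * ‖Py - d n‖ := by
            apply mul_le_mul_of_nonneg_right (by linarith) (norm_nonneg _)
        _ < (R + 1) * (ε / (4 * (R + 1))) := by
            apply mul_lt_mul_of_pos_left e2 (by linarith)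
        _ = ε / 4 := h4
    have expand : ∀ j, ⟪x (φ j), y⟫ = ⟪x (φ j), d n⟫ + ⟪x (φ j), Py - d n⟫ := by
      intro j
      rw [inner_sub_right, hxy]
      ring
    rw [Real.dist_eq, expand m, expand l]
    rw [Real.dist_eq] at hml
    have := e3 m
    have := e3 l
    have habs : |(⟪x (φ m), d n⟫ + ⟪x (φ m), Py - d n⟫) -
        (⟪x (φ l), d n⟫ + ⟪x (φ l), Py - d n⟫)| ≤
        |⟪x (φ m), d n⟫ - ⟪x (φ l), d n⟫| + |⟪x (φ m), Py - d n⟫| + |⟪x (φ l), Py - d n⟫| := by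
      have := abs_sub_abs_le_abs_sub (⟪x (φ m), d n⟫) (⟪x (φ l), d n⟫)
      calc |(⟪x (φ m), d n⟫ + ⟪x (φ m), Py - d n⟫) -
          (⟪x (φ l), d n⟫ + ⟪x (φ l), Py - d n⟫)|
          = |(⟪x (φ m), d n⟫ - ⟪x (φ l), d n⟫) +
            (⟪x (φ m), Py - d n⟫ + -⟪x (φ l), Py - d n⟫)| := by ring_nf
        _ ≤ |⟪x (φ m), d n⟫ - ⟪x (φ l), d n⟫| + |⟪x (φ m), Py - d n⟫ + -⟪x (φ l), Py - d n⟫| :=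
            abs_add_le _ _
        _ ≤ |⟪x (φ m), d n⟫ - ⟪x (φ l), d n⟫| + (|⟪x (φ m), Py - d n⟫| + |-⟪x (φ l), Py - d n⟫|) :=
            by gcongr; exact abs_add_le _ _
        _ = |⟪x (φ m), d n⟫ - ⟪x (φ l), d n⟫| + |⟪x (φ m), Py - d n⟫| + |⟪x (φ l), Py - d n⟫| := by
            rw [abs_neg]; ring
    calc |(⟪x (φ m), d n⟫ + ⟪x (φ m), Py - d n⟫) -
        (⟪x (φ l), d n⟫ + ⟪x (φ l), Py - d n⟫)|
        ≤ |⟪x (φ m), d n⟫ - ⟪x (φ l), d n⟫| + |⟪x (φ m), Py - d n⟫| + |⟪x (φ l), Py - d n⟫| :=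
          habs
      _ < ε / 2 + ε / 4 + ε / 4 := by
          have := e3 m; have := e3 l; gcongr <;> linarith [e3 m, e3 l]
      _ = ε := by ring
  -- define the limit functional
  have hlim : ∀ y : H, ∃ L : ℝ, Tendsto (fun k => ⟪x (φ k), y⟫) atTop (𝓝 L) :=
    fun y => cauchySeq_tendsto_of_complete (key y)
  choose L hL using hlim
  have hmap_add : ∀ y z : H, L (y + z) = L y + L z := by
    intro y z
    have h1 : Tendsto (fun k => ⟪x (φ k), y + z⟫) atTop (𝓝 (L y + L z)) := by
      have := (hL y).add (hL z)
      simpa [inner_add_right] using this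
    exact tendsto_nhds_unique (hL (y + z)) h1
  have hmap_smul : ∀ (r : ℝ) (y : H), L (r • y) = r * L y := by
    intro r y
    have h1 : Tendsto (fun k => ⟪x (φ k), r • y⟫) atTop (𝓝 (r * L y)) := by
      have := (hL y).const_mul r
      simpa [inner_smul_right] using this
    exact tendsto_nhds_unique (hL (r • y)) h1
  have hLbound : ∀ y : H, ‖L y‖ ≤ R * ‖y‖ := by
    intro y
    have h1 : Tendsto (fun k => |⟪x (φ k), y⟫|) atTop (𝓝 |L y|) := (hL y).abs
    have h2 : ∀ k, |⟪x (φ k), y⟫| ≤ R * ‖y‖ := fun k => hbound _ _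
    exact le_of_tendsto h1 (Eventually.of_forall h2)
  let f : H →ₗ[ℝ] ℝ :=
    { toFun := L
      map_add' := hmap_add
      map_smul' := fun r y => by simpa using hmap_smul r y }
  let fC : H →L[ℝ] ℝ := f.mkContinuous R hLbound
  let g : H := (InnerProductSpace.toDual ℝ H).symm fC
  refine ⟨g, φ, hφmono, fun w => ?_⟩
  have hg : ⟪g, w⟫ = L w := by
    have : InnerProductSpace.toDual ℝ H g = fC := by
      simp [g]
    have h2 : InnerProductSpace.toDual ℝ H g w = ⟪g, w⟫ := InnerProductSpace.toDual_apply_apply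
    rw [this] at h2
    exact h2.symm
  rw [hg]
  exact hL w

theorem stmt6 {H : Type*} [NormedAddCommGroup H] [InnerProductSpace ℝ H] [CompleteSpace H]
    (U : Set H) (hUc : IsClosed U) (hUconv : Convex ℝ U)
    (ρ : ℝ) (hρ : 0 < ρ)
    (J : H → ℝ) (hJcont : Continuous J)
    (Jε : ℝ → H → ℝ) (hhat : H) (hhhat : hhat ∈ U)
    (hstrict : ∀ g ∈ U ∩ Metric.closedBall hhat ρ, g ≠ hhat → J hhat < J g)
    (h : ℝ → H)
    (hsol : ∀ ε > (0:ℝ), h ε ∈ U ∩ Metric.closedBall hhat ρ ∧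
      ∀ g ∈ U ∩ Metric.closedBall hhat ρ, Jε ε (h ε) ≤ Jε ε g)
    (hweak : ∀ εs : ℕ → ℝ, (∀ k, 0 < εs k) → Tendsto εs atTop (nhds 0) →
      ∀ g : H, (∀ w : H, Tendsto (fun k => ⟪h (εs k), w⟫) atTop (nhds ⟪g, w⟫)) →
        g ∈ U ∩ Metric.closedBall hhat ρ ∧
          (∀ g' ∈ U ∩ Metric.closedBall hhat ρ, J g ≤ J g') ∧
          Tendsto (fun k => h (εs k)) atTop (nhds g)) :
    Tendsto h (nhdsWithin 0 (Set.Ioi 0)) (nhds hhat) ∧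
      ∀ᶠ ε in nhdsWithin (0:ℝ) (Set.Ioi 0), h ε ∈ Metric.ball hhat ρ := by
  have main : Tendsto h (nhdsWithin 0 (Set.Ioi 0)) (nhds hhat) := by
    by_contra hcon
    rw [Metric.tendsto_nhds] at hcon
    push_neg at hcon
    obtain ⟨δ, hδ, hfreq⟩ := hcon
    -- build a positive sequence tending to 0 with dist (h εs) hhat ≥ δ
    have hchoice : ∀ n : ℕ, ∃ ε : ℝ, 0 < ε ∧ ε < ((n : ℝ) + 1)⁻¹ ∧ δ ≤ dist (h ε) hhat := by
      intro n
      have hmem : Set.Ioo (0 : ℝ) (((n : ℝ) + 1)⁻¹) ∈ nhdsWithin (0:ℝ) (Set.Ioi 0) :=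
        Ioo_mem_nhdsGT_of_mem ⟨le_refl 0, by positivity⟩
      obtain ⟨ε, hε1, hε2⟩ := (hfreq.and_eventually (eventually_of_mem hmem fun x hx => hx)).exists
      exact ⟨ε, hε2.1, hε2.2, hε1⟩
    choose εs hpos hsmall hfar using hchoice
    have hεs0 : Tendsto εs atTop (𝓝 (0 : ℝ)) := by
      apply squeeze_zero (fun n => (hpos n).le) (fun n => (hsmall n).le)
      have := tendsto_one_div_add_atTop_nhds_zero_nat (𝕜 := ℝ)
      simpa [one_div] using this
    -- bounded sequence
    set x : ℕ → H := fun k => h (εs k) with hxdef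
    have hxb : ∀ k, ‖x k‖ ≤ ρ + ‖hhat‖ := by
      intro k
      have hmem := (hsol (εs k) (hpos k)).1.2
      rw [Metric.mem_closedBall, dist_eq_norm] at hmem
      calc ‖x k‖ = ‖(x k - hhat) + hhat‖ := by congr 1; abel
        _ ≤ ‖x k - hhat‖ + ‖hhat‖ := norm_add_le _ _
        _ ≤ ρ + ‖hhat‖ := by gcongr
    obtain ⟨g, φ, hφmono, hw⟩ := weak_seq_compact_aux (ρ + ‖hhat‖) x hxb
    have hcomp : Tendsto (εs ∘ φ) atTop (𝓝 (0 : ℝ)) := hεs0.comp hφmono.tendsto_atTop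
    obtain ⟨hgmem, hgmin, hgstrong⟩ :=
      hweak (εs ∘ φ) (fun k => hpos (φ k)) hcomp g (fun w => hw w)
    have hghat : g = hhat := by
      by_contra hne
      have h1 := hstrict g hgmem hne
      have h2 := hgmin hhat ⟨hhhat, Metric.mem_closedBall_self hρ.le⟩
      linarith
    rw [hghat] at hgstrong
    have := (Metric.tendsto_nhds.mp hgstrong δ hδ).exists
    obtain ⟨k, hk⟩ := this
    have := hfar (φ k)
    simp only [Function.comp] at hk
    linarith
  refine ⟨main, ?_⟩
  exact main.eventually (eventually_of_mem (Metric.ball_mem_nhds hhat hρ) fun y hy => hy)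
end

section
/- Let H be a real Hilbert space, U ⊆ H closed convex, J, J_ε : H → ℝ with J of class C². Let ĥ, h_ε ∈ U satisfy the first-order conditions J'(ĥ)(h − ĥ) ≥ 0 and J_ε'(h_ε)(h − h_ε) ≥ 0 for all h ∈ U. Suppose there exist μ > 0 and θ ∈ (0,1) with J''(ĥ + θ(h_ε − ĥ))[(h_ε − ĥ), (h_ε − ĥ)] ≥ (μ/2)‖h_ε − ĥ‖², and that the mean value identity [J'(h_ε) − J'(ĥ)](h_ε − ĥ) = J''(ĥ + θ(h_ε − ĥ))[(h_ε − ĥ)]² holds. If additionally |[J_ε'(h_ε) − J'(h_ε)](v)| ≤ C δ ‖v‖ for all v ∈ H (with δ ≥ 0 a perturbation size), then ‖h_ε − ĥ‖ ≤ (2C/μ) δ. -/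
theorem stmt8 {H : Type*} [NormedAddCommGroup H] [InnerProductSpace ℝ H] [CompleteSpace H]
    (U : Set H) (hUc : IsClosed U) (hUconv : Convex ℝ U)
    (J Jε : H → ℝ) (hJ : ContDiff ℝ 2 J) (hJε : Differentiable ℝ Jε)
    (hhat heps : H) (hhhatU : hhat ∈ U) (hepsU : heps ∈ U)
    (hfoc1 : ∀ g ∈ U, 0 ≤ fderiv ℝ J hhat (g - hhat))
    (hfoc2 : ∀ g ∈ U, 0 ≤ fderiv ℝ Jε heps (g - heps))
    (μ C δ θ : ℝ) (hμ : 0 < μ) (hC : 0 < C) (hδ : 0 ≤ δ) (hθ : θ ∈ Set.Ioo (0:ℝ) 1)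
    (hcoer : μ / 2 * ‖heps - hhat‖ ^ 2
      ≤ fderiv ℝ (fderiv ℝ J) (hhat + θ • (heps - hhat)) (heps - hhat) (heps - hhat))
    (hmvt : (fderiv ℝ J heps - fderiv ℝ J hhat) (heps - hhat)
      = fderiv ℝ (fderiv ℝ J) (hhat + θ • (heps - hhat)) (heps - hhat) (heps - hhat))
    (hpert : ∀ v : H, |(fderiv ℝ Jε heps - fderiv ℝ J heps) v| ≤ C * δ * ‖v‖) :
    ‖heps - hhat‖ ≤ (2 * C / μ) * δ := by
  set d := heps - hhat with hd
  have h1 : 0 ≤ fderiv ℝ J hhat d := hfoc1 heps hepsU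
  have h2 : 0 ≤ fderiv ℝ Jε heps (hhat - heps) := hfoc2 hhat hhhatU
  have h2' : fderiv ℝ Jε heps d ≤ 0 := by
    have : fderiv ℝ Jε heps (hhat - heps) = - fderiv ℝ Jε heps d := by
      rw [hd, ← map_neg, neg_sub]
    linarith [this ▸ h2]
  have hp := hpert d
  have hsub : (fderiv ℝ Jε heps - fderiv ℝ J heps) d
      = fderiv ℝ Jε heps d - fderiv ℝ J heps d := rfl
  have hJd : fderiv ℝ J heps d ≤ C * δ * ‖d‖ := by
    have := abs_le.mp hp
    rw [hsub] at this
    linarith [this.1]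
  have hmvt' : (fderiv ℝ J heps - fderiv ℝ J hhat) d
      = fderiv ℝ J heps d - fderiv ℝ J hhat d := rfl
  have key : μ / 2 * ‖d‖ ^ 2 ≤ C * δ * ‖d‖ := by
    rw [hmvt', ] at hmvt
    linarith
  rcases eq_or_lt_of_le (norm_nonneg d) with h0 | h0
  · rw [← h0]
    positivity
  · have : μ / 2 * ‖d‖ ≤ C * δ := by
      have := (mul_le_mul_iff_of_pos_right h0).mpr (le_refl (1:ℝ))
      nlinarith
    rw [div_mul_eq_mul_div, le_div_iff₀ hμ]
    nlinarith
end
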